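/- arXiv:2004.12680 — 3 statements merged into one kernel-verified Lean document; each statement's English description precedes it below -/
import Mathlib

section
/- For every m ∈ ℕ and every sample X = (X_1,...,X_m) ∈ ℕ^m with induced empirical measure μ̂_m, the empirical Rademacher complexity of the class of all boolean functions on ℕ admits the exact expression R̂_m(X) = (1/m)·∑_{x : μ̂_m(x) > 0} (1/2^{m·μ̂_m(x)})·⌈m·μ̂_m(x)/2⌉·C(m·μ̂_m(x), ⌈m·μ̂_m(x)/2⌉), where C(n,k) denotes the binomial coefficient. -/
open scoped BigOperators

/-- The empirical measure induced by a sample `x` of size `m`: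
`μ̂_m(i) = (1/m) ∑_t 1{x_t = i}`. -/
noncomputable def empMeas (m : ℕ) (x : Fin m → ℕ) (i : ℕ) : ℝ :=
  ((Finset.univ.filter (fun t => x t = i)).card : ℝ) / m

/-- Total variation distance `(1/2) ∑_i |μ(i) - ν(i)|`. -/
noncomputable def tvDist (μ ν : ℕ → ℝ) : ℝ := (1 / 2) * ∑' i, |μ i - ν i|

/-- `Φ_m(ν) = (1/√m) ∑_j √(ν j)`. -/
noncomputable def Phi (m : ℕ) (ν : ℕ → ℝ) : ℝ :=
  (1 / Real.sqrt m) * ∑' j, Real.sqrt (ν j)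

/-- `μ` is a probability distribution on ℕ. -/
def IsProb (μ : ℕ → ℝ) : Prop := (∀ i, 0 ≤ μ i) ∧ ∑' i, μ i = 1

/-- Probability of the event `A` under the i.i.d. product `μ^m`. -/
noncomputable def probOf (μ : ℕ → ℝ) (m : ℕ) (A : Set (Fin m → ℕ)) : ℝ :=
  ∑' x : Fin m → ℕ, Set.indicator A (fun y => ∏ t, μ (y t)) x

/-- Expectation of `f` under the i.i.d. product `μ^m`. -/
noncomputable def expect (μ : ℕ → ℝ) (m : ℕ) (f : (Fin m → ℕ) → ℝ) : ℝ :=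
  ∑' x : Fin m → ℕ, (∏ t, μ (x t)) * f x

/-- Empirical Rademacher complexity of the class of all boolean functions on ℕ,
conditional on the sample `x`:
`R̂_m(x) = E_σ [ sup_{f : ℕ → {0,1}} (1/m) ∑_t σ_t f(x_t) ]`,
with `σ` uniform on `{-1,1}^m`. -/
noncomputable def empRad (m : ℕ) (x : Fin m → ℕ) : ℝ :=
  (1 / 2 ^ m) * ∑ σ : Fin m → Bool,
    sSup (Set.range (fun f : ℕ → Bool =>
      (1 / (m : ℝ)) * ∑ t, (if σ t then (1 : ℝ) else -1) * (if f (x t) then (1 : ℝ) else 0)))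

/-- `Λ_m(μ) = ∑_{j : μ(j) < 1/m} μ(j) + (1/(2√m)) ∑_{j : μ(j) ≥ 1/m} √(μ(j))`. -/
noncomputable def Lam (m : ℕ) (μ : ℕ → ℝ) : ℝ :=
  (∑' j, Set.indicator {j | μ j < 1 / (m : ℝ)} μ j)
    + (1 / (2 * Real.sqrt m)) *
      ∑' j, Set.indicator {j | 1 / (m : ℝ) ≤ μ j} (fun j => Real.sqrt (μ j)) j

/-- The half-norm `‖ν‖_{1/2} = (∑_i √(ν i))²`. -/
noncomputable def hfnrm (ν : ℕ → ℝ) : ℝ := (∑' i, Real.sqrt (ν i)) ^ 2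

/-- `T_μ(η)` with respect to a non-increasing rearrangement `π` of `μ`:
the least `t` such that the tail mass beyond the `t` largest atoms is `< η`
(ranks are 0-indexed). -/
noncomputable def truncT (μ : ℕ → ℝ) (π : ℕ ≃ ℕ) (η : ℝ) : ℕ :=
  sInf {t : ℕ | ∑' i, μ (π (i + t)) < η}

/-- The truncation `μ[η]`: keep only the `T_μ(η)` largest atoms of `μ`
(as ranked by the non-increasing rearrangement `π`). -/
noncomputable def trunc (μ : ℕ → ℝ) (π : ℕ ≃ ℕ) (η : ℝ) (i : ℕ) : ℝ :=
  Set.indicator {i | π.symm i < truncT μ π η} μ i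

/-- Number of occurrences of `i` in the sample `x`; equals `m · μ̂_m(i)`. -/
def cnt (m : ℕ) (x : Fin m → ℕ) (i : ℕ) : ℕ :=
  (Finset.univ.filter (fun t => x t = i)).card



/-! For fixed signs `σ`, the supremum over `f` decouples over the distinct sample points: `f` should
be `1` exactly on the atoms `i` whose signed count `Sᵢ = ∑_{x_t = i} σ_t` is positive, which gives
`∑ᵢ max(Sᵢ, 0)`. Averaging over `σ`, only the `nᵢ` signs sitting on atom `i` matter, and for a sum `S`
of `n` independent signs `2ⁿ 𝔼 max(S, 0) = ∑ₖ C(n,k) (2k - n)⁺`. On `k ≥ ⌈n/2⌉` the summand is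
`k C(n,k) - (k+1) C(n,k+1)`, so the sum telescopes to `⌈n/2⌉ C(n, ⌈n/2⌉)`. -/

open Finset

theorem Nat.choose_mul_two_mul_sub_eq {n k : ℕ} (hk : k ≤ n) :
    (n.choose k : ℝ) * (2 * k - n) = k * n.choose k - (k + 1) * n.choose (k + 1) := by
  have h : ((n.choose (k + 1) * (k + 1) : ℕ) : ℝ) = (n.choose k * (n - k) : ℕ) :=
    congrArg _ (Nat.choose_succ_right_eq n k)
  push_cast [Nat.cast_sub hk] at h
  linarith

theorem Nat.sum_choose_mul_max_two_mul_sub (n : ℕ) :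
    ∑ k ∈ range (n + 1), (n.choose k : ℝ) * max (2 * (k : ℝ) - n) 0
      = (((n + 1) / 2 : ℕ) : ℝ) * n.choose ((n + 1) / 2) := by
  set c := (n + 1) / 2
  have hlow : ∑ k ∈ range c, (n.choose k : ℝ) * max (2 * (k : ℝ) - n) 0 = 0 := by
    refine sum_eq_zero fun k hk => ?_
    have : (2 * k : ℝ) ≤ n := by rw [mem_range] at hk; exact_mod_cast (by omega : 2 * k ≤ n)
    rw [max_eq_right (by linarith), mul_zero]
  have hhigh : ∀ k ∈ Ico c (n + 1), (n.choose k : ℝ) * max (2 * (k : ℝ) - n) 0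
      = -(((k + 1 : ℕ) : ℝ) * n.choose (k + 1) - k * n.choose k) := by
    intro k hk
    rw [mem_Ico] at hk
    have : (n : ℝ) ≤ 2 * k := by exact_mod_cast (by omega : n ≤ 2 * k)
    rw [max_eq_left (by linarith), Nat.choose_mul_two_mul_sub_eq (by omega)]
    push_cast
    ring
  rw [← sum_range_add_sum_Ico _ (by omega : c ≤ n + 1), hlow, zero_add, sum_congr rfl hhigh,
    sum_neg_distrib, sum_Ico_sub (fun k => (k : ℝ) * n.choose k) (by omega),
    Nat.choose_eq_zero_of_lt n.lt_succ_self]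
  simp

theorem Finset.sum_ite_one_neg_one {α : Type*} (s : Finset α) (p : α → Prop) [DecidablePred p] :
    ∑ t ∈ s, (if p t then (1 : ℝ) else -1) = 2 * #{t ∈ s | p t} - #s := by
  rw [sum_ite, sum_const, sum_const, ← card_filter_add_card_filter_not (s := s) p]
  simp only [nsmul_eq_mul, Nat.cast_add]
  ring

theorem Fintype.sum_max_sum_ite_one_neg_one (α : Type*) [Fintype α] [DecidableEq α] :
    ∑ τ : α → Bool, max (∑ t, if τ t then (1 : ℝ) else -1) 0
      = (((card α + 1) / 2 : ℕ) : ℝ) * (card α).choose ((card α + 1) / 2) := by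
  calc ∑ τ : α → Bool, max (∑ t, if τ t then (1 : ℝ) else -1) 0
      = ∑ s ∈ (univ : Finset α).powerset, max (2 * (#s : ℝ) - card α) 0 := by
        refine sum_nbij' (fun τ => univ.filter (τ ·)) (fun s t => decide (t ∈ s)) ?_ ?_ ?_ ?_ ?_
        all_goals intro τ; simp [sum_ite_one_neg_one]
    _ = ∑ k ∈ range (card α + 1), ((card α).choose k : ℝ) * max (2 * (k : ℝ) - card α) 0 := by
        rw [sum_powerset_apply_card fun k => max (2 * (k : ℝ) - card α) 0, card_univ]
        simp only [nsmul_eq_mul]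
    _ = _ := Nat.sum_choose_mul_max_two_mul_sub _

theorem Fintype.sum_pi_restrict {α β M : Type*} [Fintype α] [DecidableEq α] [Fintype β]
    [AddCommMonoid M] (s : Finset α) (G : (s → β) → M) :
    ∑ σ : α → β, G (fun t => σ t) = (card β ^ (card α - #s)) • ∑ τ, G τ := by
  rw [Fintype.sum_equiv (Equiv.piEquivPiSubtypeProd (· ∈ s) fun _ => β) (fun σ => G fun t => σ t)
    (fun q => G q.1) fun _ => rfl, Fintype.sum_prod_type, sum_comm]
  simp only [sum_const, card_univ, card_pi, prod_const, card_subtype_compl, card_coe]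

theorem Fintype.sum_max_sum_mem_ite_one_neg_one {ι : Type*} [Fintype ι] [DecidableEq ι]
    (s : Finset ι) :
    ∑ σ : ι → Bool, max (∑ t ∈ s, if σ t then (1 : ℝ) else -1) 0
      = 2 ^ (card ι - #s) * ((((#s + 1) / 2 : ℕ) : ℝ) * (#s).choose ((#s + 1) / 2)) := by
  simp only [← sum_coe_sort s]
  rw [sum_pi_restrict s fun τ : s → Bool => max (∑ t, if τ t then (1 : ℝ) else -1) 0,
    sum_max_sum_ite_one_neg_one, card_coe, card_bool, nsmul_eq_mul]
  push_cast
  rfl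

section Supremum

variable {ι β : Type*} [Fintype ι] [DecidableEq β] (w : ι → ℝ) (x : ι → β)

theorem sum_mul_ite_comp_eq_sum_image (f : β → Bool) :
    ∑ t, w t * (if f (x t) then 1 else 0)
      = ∑ i ∈ univ.image x, (∑ t with x t = i, w t) * if f i then 1 else 0 := by
  rw [← sum_fiberwise_of_maps_to fun t _ => mem_image_of_mem x (mem_univ t)]
  refine sum_congr rfl fun i _ => ?_
  rw [sum_mul]
  exact sum_congr rfl fun t ht => by rw [(mem_filter.1 ht).2]

/-- The supremum is attained at the indicator of the atoms with positive weight. -/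
theorem isGreatest_range_sum_mul_ite_comp :
    IsGreatest (Set.range fun f : β → Bool => ∑ t, w t * if f (x t) then 1 else 0)
      (∑ i ∈ univ.image x, max (∑ t with x t = i, w t) 0) := by
  let f₀ : β → Bool := fun i => decide (0 < ∑ t with x t = i, w t)
  refine ⟨⟨f₀, (sum_mul_ite_comp_eq_sum_image w x f₀).trans (sum_congr rfl fun i _ => ?_)⟩, ?_⟩
  · by_cases h : 0 < ∑ t with x t = i, w t
    · simp [f₀, h, h.le]
    · simp [f₀, h, not_lt.1 h]
  · rintro _ ⟨f, rfl⟩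
    refine (sum_mul_ite_comp_eq_sum_image w x f).trans_le (sum_le_sum fun i _ => ?_)
    cases f i <;> simp

theorem sSup_range_mul_sum_mul_ite_comp {c : ℝ} (hc : 0 ≤ c) :
    sSup (Set.range fun f : β → Bool => c * ∑ t, w t * if f (x t) then 1 else 0)
      = c * ∑ i ∈ univ.image x, max (∑ t with x t = i, w t) 0 := by
  have h := (monotone_mul_left_of_nonneg hc).map_isGreatest (isGreatest_range_sum_mul_ite_comp w x)
  rw [← Set.range_comp] at h
  exact h.csSup_eq

end Supremum

theorem empRad_exact_general (m : ℕ) (x : Fin m → ℕ) :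
    empRad m x = (1 / (m : ℝ)) * ∑' i : ℕ,
      Set.indicator {i | 0 < cnt m x i}
        (fun i => ((((cnt m x i + 1) / 2 : ℕ) : ℝ) *
            ((cnt m x i).choose ((cnt m x i + 1) / 2) : ℝ)) / 2 ^ (cnt m x i)) i := by
  have hsupp : {i | 0 < cnt m x i} = ↑(univ.image x) := by
    ext i
    simp [cnt, card_pos, filter_nonempty_iff, eq_comm]
  rw [hsupp, ← sum_eq_tsum_indicator, empRad]
  simp only [sSup_range_mul_sum_mul_ite_comp _ x (by positivity : (0 : ℝ) ≤ 1 / m)]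
  rw [← mul_sum, sum_comm, mul_left_comm, mul_sum]
  congr 1
  refine sum_congr rfl fun i _ => ?_
  have hcnt : #{t | x t = i} = cnt m x i := rfl
  have hle : cnt m x i ≤ m := (card_filter_le _ _).trans_eq (card_fin m)
  rw [Fintype.sum_max_sum_mem_ite_one_neg_one, Fintype.card_fin, hcnt,
    pow_sub₀ 2 two_ne_zero hle]
  field_simp

/-- exact expression for the empirical Rademacher complexity:
`R̂_m(x) = (1/m) ∑_{i : μ̂_m(i) > 0} 2^{-n_i} ⌈n_i/2⌉ C(n_i, ⌈n_i/2⌉)` where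
`n_i = m·μ̂_m(i)` and `⌈n/2⌉ = (n+1)/2` in ℕ. -/
theorem empRad_exact (m : ℕ) (hm : 0 < m) (x : Fin m → ℕ) :
    empRad m x = (1 / (m : ℝ)) * ∑' i : ℕ,
      Set.indicator {i | 0 < cnt m x i}
        (fun i => ((((cnt m x i + 1) / 2 : ℕ) : ℝ) *
            ((cnt m x i).choose ((cnt m x i + 1) / 2) : ℝ)) / 2 ^ (cnt m x i)) i :=
  empRad_exact_general m x
end

section
/- There is a universal constant C > 0 such that for every even d ∈ ℕ with d ≥ 16, every m ∈ ℕ, and every ε ∈ (0, 1/16), the minimax risk over distributions supported on {1,...,d} satisfies inf_{μ̄} sup_{μ ∈ Δ_d} P_{X ~ μ^m}(‖μ̄(X) − μ‖_TV > ε) ≥ (1/2)·(1 − C·m·ε²/d), where the infimum is over all estimators μ̄ : [d]^m → Δ_d. -/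
open scoped BigOperators

/-- `μ` is a probability distribution supported on the first `d` naturals. -/
def IsProbOn (d : ℕ) (μ : ℕ → ℝ) : Prop := IsProb μ ∧ ∀ i, d ≤ i → μ i = 0

/-!
Write `d = 2n` and perturb the uniform distribution on `[2n]` along Tsybakov's hypercube: the
pair `{2j, 2j+1}` gets masses `(1 ± δ)/(2n)`, the sign chosen by a vertex `τ ⊆ [n]`. Hypotheses
that are `2ε`-apart in total variation cannot both be `ε`-close to the estimate, and it suffices
to find a family of hypotheses whose average probability of success is at most `1/2`.

* If `2m ≤ n`, take `δ = 1/2` and all `2ⁿ` vertices. A sample visits at most `m ≤ n/2` pairs;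
  flipping `τ` on the unvisited pairs leaves the likelihood of the sample unchanged but moves the
  hypothesis by at least `1/4 > 2ε`, so pairing `τ` with its flip halves the total success.
* If `n < 2m`, take `δ² = n/(4m)` and a Gilbert–Varshamov code of minimum distance `≈ n/2²⁰`,
  which has at least `4(1 + δ²)ᵐ` codewords once `m ε² ≪ n`. Since at most one codeword is
  `ε`-close to the estimate, Cauchy–Schwarz bounds the total success by `√(#A (1 + δ²)ᵐ) ≤ #A/2`.

When `C m ε² / d ≥ 1` the bound is trivial.
-/

open Finset

section Sampling

variable {d m : ℕ} {μ : ℕ → ℝ}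

def sampleSpace (d m : ℕ) : Finset (Fin m → ℕ) := Fintype.piFinset fun _ => range d

noncomputable def likelihood {m : ℕ} (μ : ℕ → ℝ) (x : Fin m → ℕ) : ℝ := ∏ t, μ (x t)

lemma card_sampleSpace : #(sampleSpace d m) = d ^ m := by
  simp [sampleSpace]

lemma sum_likelihood_sampleSpace (μ : ℕ → ℝ) :
    ∑ x ∈ sampleSpace d m, likelihood μ x = (∑ a ∈ range d, μ a) ^ m := by
  simp only [likelihood, sampleSpace]
  rw [← prod_univ_sum, prod_const, card_univ, Fintype.card_fin]

lemma likelihood_nonneg (hμ : ∀ i, 0 ≤ μ i) (x : Fin m → ℕ) : 0 ≤ likelihood μ x :=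
  prod_nonneg fun _ _ => hμ _

lemma likelihood_sq (μ : ℕ → ℝ) (x : Fin m → ℕ) :
    likelihood μ x ^ 2 = likelihood (fun a => μ a ^ 2) x :=
  (prod_pow _ _ _).symm

lemma likelihood_eq_zero_of_notMem (hμ : ∀ i, d ≤ i → μ i = 0) {x : Fin m → ℕ}
    (hx : x ∉ sampleSpace d m) : likelihood μ x = 0 := by
  simp only [sampleSpace, Fintype.mem_piFinset, mem_range, not_forall, not_lt] at hx
  obtain ⟨t, ht⟩ := hx
  exact prod_eq_zero (mem_univ t) (hμ _ ht)

lemma IsProbOn.sum_range (hμ : IsProbOn d μ) : ∑ a ∈ range d, μ a = 1 := by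
  rw [← hμ.1.2, tsum_eq_sum (s := range d) fun i hi => hμ.2 i (by simpa using hi)]

lemma IsProbOn.sum_likelihood (hμ : IsProbOn d μ) :
    ∑ x ∈ sampleSpace d m, likelihood μ x = 1 := by
  rw [sum_likelihood_sampleSpace, hμ.sum_range, one_pow]

lemma probOf_eq_sum (hμ : ∀ i, d ≤ i → μ i = 0) (A : Set (Fin m → ℕ)) :
    probOf μ m A = ∑ x ∈ sampleSpace d m, A.indicator (likelihood μ) x :=
  tsum_eq_sum fun _ hx => Set.indicator_apply_eq_zero.2 fun _ => likelihood_eq_zero_of_notMem hμ hx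

end Sampling

section Risk

variable {d m : ℕ} {est : (Fin m → ℕ) → ℕ → ℝ} {ε : ℝ} {μ : ℕ → ℝ}

noncomputable def risk (est : (Fin m → ℕ) → ℕ → ℝ) (ε : ℝ) (μ : ℕ → ℝ) : ℝ :=
  probOf μ m {x | ε < tvDist (est x) μ}

noncomputable def successAt (est : (Fin m → ℕ) → ℕ → ℝ) (ε : ℝ) (μ : ℕ → ℝ) (x : Fin m → ℕ) : ℝ :=
  if tvDist (est x) μ ≤ ε then likelihood μ x else 0

noncomputable def success (d : ℕ) (est : (Fin m → ℕ) → ℕ → ℝ) (ε : ℝ) (μ : ℕ → ℝ) : ℝ :=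
  ∑ x ∈ sampleSpace d m, successAt est ε μ x

lemma successAt_nonneg (hμ : ∀ i, 0 ≤ μ i) (x : Fin m → ℕ) : 0 ≤ successAt est ε μ x := by
  unfold successAt; split_ifs <;> simp [likelihood_nonneg hμ]

lemma successAt_le_likelihood (hμ : ∀ i, 0 ≤ μ i) (x : Fin m → ℕ) :
    successAt est ε μ x ≤ likelihood μ x := by
  unfold successAt; split_ifs <;> simp [likelihood_nonneg hμ]

lemma IsProbOn.risk_eq (hμ : IsProbOn d μ) : risk est ε μ = 1 - success d est ε μ := by
  rw [risk, probOf_eq_sum hμ.2, ← hμ.sum_likelihood (m := m), success, ← sum_sub_distrib]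
  refine sum_congr rfl fun x _ => ?_
  by_cases h : tvDist (est x) μ ≤ ε <;> simp [successAt, Set.indicator_apply, h]

lemma IsProbOn.risk_nonneg (hμ : IsProbOn d μ) : 0 ≤ risk est ε μ := by
  rw [risk, probOf_eq_sum hμ.2]
  exact sum_nonneg fun x _ => Set.indicator_nonneg (fun y _ => likelihood_nonneg hμ.1.1 y) x

lemma IsProbOn.risk_le_one (hμ : IsProbOn d μ) : risk est ε μ ≤ 1 := by
  rw [hμ.risk_eq, sub_le_self_iff]
  exact sum_nonneg fun x _ => successAt_nonneg hμ.1.1 x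

lemma IsProbOn.risk_le_sSup (hμ : IsProbOn d μ) :
    risk est ε μ ≤ sSup {r | ∃ μ, IsProbOn d μ ∧ r = risk est ε μ} :=
  le_csSup ⟨1, by rintro r ⟨ν, hν, rfl⟩; exact hν.risk_le_one⟩ ⟨μ, hμ, rfl⟩

lemma exists_half_le_risk_of_sum_success_le {ι : Type*} {A : Finset ι} (hA : A.Nonempty)
    {μ : ι → ℕ → ℝ} (hμ : ∀ τ ∈ A, IsProbOn d (μ τ))
    (h : ∑ τ ∈ A, success d est ε (μ τ) ≤ #A / 2) :
    ∃ ν, IsProbOn d ν ∧ 1 / 2 ≤ risk est ε ν := by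
  obtain ⟨τ, hτ, hle⟩ := exists_le_of_sum_le hA (f := fun τ => success d est ε (μ τ))
    (g := fun _ => (1 / 2 : ℝ)) (by rw [sum_const, nsmul_eq_mul]; linarith)
  exact ⟨μ τ, hμ τ hτ, by rw [(hμ τ hτ).risk_eq]; linarith⟩

end Risk

section TotalVariation

variable {μ ν ρ : ℕ → ℝ}

lemma tvDist_comm (μ ν : ℕ → ℝ) : tvDist μ ν = tvDist ν μ := by
  simp only [tvDist, abs_sub_comm]

lemma IsProb.summable (hμ : IsProb μ) : Summable μ := by
  by_contra h
  exact zero_ne_one ((tsum_eq_zero_of_not_summable h).symm.trans hμ.2)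

lemma IsProb.summable_abs_sub (hμ : IsProb μ) (hν : IsProb ν) :
    Summable fun i => |μ i - ν i| :=
  (hμ.summable.add hν.summable).of_nonneg_of_le (fun _ => abs_nonneg _) fun i =>
    (abs_sub _ _).trans_eq (by rw [abs_of_nonneg (hμ.1 i), abs_of_nonneg (hν.1 i)])

lemma tvDist_triangle (hμ : IsProb μ) (hν : IsProb ν) (hρ : IsProb ρ) :
    tvDist μ ρ ≤ tvDist μ ν + tvDist ν ρ := by
  rw [tvDist, tvDist, tvDist, ← mul_add,
    ← (hμ.summable_abs_sub hν).tsum_add (hν.summable_abs_sub hρ)]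
  exact mul_le_mul_of_nonneg_left ((hμ.summable_abs_sub hρ).tsum_le_tsum
    (fun i => abs_sub_le _ _ _) ((hμ.summable_abs_sub hν).add (hν.summable_abs_sub hρ)))
    (by norm_num)

lemma tvDist_le_two_mul (hμ : IsProb μ) (hν : IsProb ν) (hρ : IsProb ρ) {ε : ℝ}
    (hμν : tvDist ν μ ≤ ε) (hνρ : tvDist ν ρ ≤ ε) : tvDist μ ρ ≤ 2 * ε := by
  have := tvDist_triangle hμ hν hρ
  rw [tvDist_comm μ ν] at this
  linarith

lemma card_filter_tvDist_le_le_one {ι : Type*} {A : Finset ι} {μ : ι → ℕ → ℝ} {ε : ℝ}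
    (hν : IsProb ν) (hμ : ∀ τ ∈ A, IsProb (μ τ))
    (hsep : (A : Set ι).Pairwise fun τ τ' => 2 * ε < tvDist (μ τ) (μ τ')) :
    #(A.filter fun τ => tvDist ν (μ τ) ≤ ε) ≤ 1 := by
  refine card_le_one.2 fun τ hτ τ' hτ' => by_contra fun hne => ?_
  rw [mem_filter] at hτ hτ'
  exact (hsep hτ.1 hτ'.1 hne).not_ge
    (tvDist_le_two_mul (hμ τ hτ.1) hν (hμ τ' hτ'.1) hτ.2 hτ'.2)

end TotalVariation

lemma sum_le_sqrt_sum_sq_of_card_le_one {ι : Type*} {s t : Finset ι} {f : ι → ℝ} (hst : s ⊆ t)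
    (hs : #s ≤ 1) (hf : ∀ i ∈ t, 0 ≤ f i) : ∑ i ∈ s, f i ≤ √(∑ i ∈ t, f i ^ 2) := by
  obtain rfl | ⟨i, rfl⟩ : s = ∅ ∨ ∃ i, s = {i} := by
    rcases Nat.le_one_iff_eq_zero_or_eq_one.1 hs with h | h
    · exact Or.inl (card_eq_zero.1 h)
    · exact Or.inr (card_eq_one.1 h)
  · simp
  · have hi : i ∈ t := hst (mem_singleton_self i)
    rw [sum_singleton, ← Real.sqrt_sq (hf i hi)]
    exact Real.sqrt_le_sqrt (single_le_sum (fun j _ => sq_nonneg (f j)) hi)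

/-- At most one hypothesis of a `2ε`-separated family is `ε`-close to `est x`, so for each sample
the successes sum to at most `√(∑_τ likelihood²)`; then Cauchy–Schwarz over the samples. -/
theorem sum_success_le_sqrt {d m : ℕ} {est : (Fin m → ℕ) → ℕ → ℝ} {ε : ℝ} {ι : Type*}
    {A : Finset ι} {μ : ι → ℕ → ℝ} (hμ : ∀ τ ∈ A, IsProbOn d (μ τ)) (hest : ∀ x, IsProb (est x))
    (hsep : (A : Set ι).Pairwise fun τ τ' => 2 * ε < tvDist (μ τ) (μ τ')) :
    ∑ τ ∈ A, success d est ε (μ τ) ≤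
      √(d ^ m * ∑ τ ∈ A, (∑ a ∈ range d, μ τ a ^ 2) ^ m) := by
  set S := sampleSpace d m
  have hpoint (x) : ∑ τ ∈ A, successAt est ε (μ τ) x ≤ √(∑ τ ∈ A, likelihood (μ τ) x ^ 2) := by
    simp only [successAt]
    rw [← sum_filter]
    exact sum_le_sqrt_sum_sq_of_card_le_one (filter_subset _ _)
      (card_filter_tvDist_le_le_one (hest x) (fun τ hτ => (hμ τ hτ).1) hsep)
      fun τ hτ => likelihood_nonneg (hμ τ hτ).1.1 x
  calc ∑ τ ∈ A, success d est ε (μ τ)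
      = ∑ x ∈ S, ∑ τ ∈ A, successAt est ε (μ τ) x := sum_comm
    _ ≤ ∑ x ∈ S, 1 * √(∑ τ ∈ A, likelihood (μ τ) x ^ 2) := by
        simp only [one_mul]; exact sum_le_sum fun x _ => hpoint x
    _ ≤ √(∑ x ∈ S, 1 ^ 2) * √(∑ x ∈ S, √(∑ τ ∈ A, likelihood (μ τ) x ^ 2) ^ 2) :=
        Real.sum_mul_le_sqrt_mul_sqrt _ _ _
    _ = √(d ^ m * ∑ τ ∈ A, (∑ a ∈ range d, μ τ a ^ 2) ^ m) := by
        rw [← Real.sqrt_mul (sum_nonneg fun _ _ => sq_nonneg _)]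
        congr 1
        simp only [one_pow, sum_const, card_sampleSpace, nsmul_eq_mul, mul_one, Nat.cast_pow, S]
        rw [sum_congr rfl fun x _ => Real.sq_sqrt (sum_nonneg fun τ _ => sq_nonneg _), sum_comm]
        simp only [likelihood_sq, sum_likelihood_sampleSpace]

lemma two_mul_sum_le_of_involutive {ι : Type*} {P : Finset ι} {σ : ι → ι}
    (hσP : ∀ τ ∈ P, σ τ ∈ P) (hσ : Function.Involutive σ) {f g : ι → ℝ}
    (h : ∀ τ ∈ P, f τ + f (σ τ) ≤ g τ) : 2 * ∑ τ ∈ P, f τ ≤ ∑ τ ∈ P, g τ := by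
  have hswap : ∑ τ ∈ P, f (σ τ) = ∑ τ ∈ P, f τ :=
    sum_nbij' σ σ hσP hσP (fun τ _ => hσ τ) (fun τ _ => hσ τ) fun _ _ => rfl
  calc 2 * ∑ τ ∈ P, f τ = ∑ τ ∈ P, (f τ + f (σ τ)) := by rw [sum_add_distrib, hswap]; ring
    _ ≤ ∑ τ ∈ P, g τ := sum_le_sum h

section Hypercube

variable {n : ℕ} {δ : ℝ} {τ τ' : Finset ℕ} {i j : ℕ}

def cubeVertex (τ : Finset ℕ) (δ : ℝ) (j : ℕ) : ℝ := if j ∈ τ then δ else -δ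

/-- Tsybakov's hypercube of distributions on `[2n]`: the pair `{2j, 2j+1}` carries the masses
`(1 ± cubeVertex τ δ j) / (2n)`. -/
noncomputable def cubeDist (n : ℕ) (δ : ℝ) (τ : Finset ℕ) (i : ℕ) : ℝ :=
  if i < 2 * n then (1 + (-1) ^ i * cubeVertex τ δ (i / 2)) / (2 * n) else 0

lemma cubeVertex_sq : cubeVertex τ δ j ^ 2 = δ ^ 2 := by
  unfold cubeVertex; split_ifs <;> ring

lemma abs_cubeVertex_sub (hδ : 0 ≤ δ) :
    |cubeVertex τ δ j - cubeVertex τ' δ j| = if j ∈ symmDiff τ τ' then 2 * δ else 0 := by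
  unfold cubeVertex
  by_cases h : j ∈ τ <;> by_cases h' : j ∈ τ' <;> simp only [h, h', mem_symmDiff] <;> norm_num
  · rw [abs_of_nonneg (by linarith)]; ring
  · rw [abs_of_nonpos (by linarith)]; ring

lemma sum_range_two_mul (f : ℕ → ℝ) :
    ∑ i ∈ range (2 * n), f i = ∑ j ∈ range n, (f (2 * j) + f (2 * j + 1)) := by
  induction n with
  | zero => simp
  | succ k ih => rw [mul_add_one, sum_range_succ, sum_range_succ, sum_range_succ, ih]; ring

lemma cubeDist_two_mul (hj : j < n) :
    cubeDist n δ τ (2 * j) = (1 + cubeVertex τ δ j) / (2 * n) := by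
  simp [cubeDist, show 2 * j < 2 * n by omega]

lemma cubeDist_two_mul_add_one (hj : j < n) :
    cubeDist n δ τ (2 * j + 1) = (1 - cubeVertex τ δ j) / (2 * n) := by
  simp [cubeDist, show 2 * j + 1 < 2 * n by omega, show (2 * j + 1) / 2 = j by omega, pow_succ,
    sub_eq_add_neg]

lemma cubeDist_of_le (hi : 2 * n ≤ i) : cubeDist n δ τ i = 0 := by
  simp [cubeDist, hi.not_gt]

lemma cubeDist_congr (h : i / 2 ∈ τ ↔ i / 2 ∈ τ') : cubeDist n δ τ i = cubeDist n δ τ' i := by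
  simp only [cubeDist, cubeVertex, h]

lemma isProbOn_cubeDist (hn : 0 < n) (hδ : |δ| ≤ 1) (τ : Finset ℕ) :
    IsProbOn (2 * n) (cubeDist n δ τ) := by
  have hsum : ∑ i ∈ range (2 * n), cubeDist n δ τ i = 1 := by
    rw [sum_range_two_mul, sum_congr rfl fun j hj => by
      rw [cubeDist_two_mul (mem_range.1 hj), cubeDist_two_mul_add_one (mem_range.1 hj)]]
    simp only [← add_div, add_add_sub_cancel, ← sum_div, sum_const, card_range, nsmul_eq_mul]
    field_simp
    norm_num
  refine ⟨⟨fun i => ?_, ?_⟩, fun i => cubeDist_of_le⟩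
  · unfold cubeDist
    split_ifs
    · have hv : |cubeVertex τ δ (i / 2)| ≤ 1 := by unfold cubeVertex; split_ifs <;> simpa
      have := neg_abs_le ((-1) ^ i * cubeVertex τ δ (i / 2))
      rw [abs_mul, abs_pow, abs_neg, abs_one, one_pow, one_mul] at this
      exact div_nonneg (by linarith) (by positivity)
    · exact le_rfl
  · rw [tsum_eq_sum (s := range (2 * n)) fun i hi => cubeDist_of_le (by simpa using hi), hsum]

lemma sum_cubeDist_sq (hn : 0 < n) :
    ∑ i ∈ range (2 * n), cubeDist n δ τ i ^ 2 = (1 + δ ^ 2) / (2 * n) := by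
  rw [sum_range_two_mul, sum_congr rfl fun j hj => by
    rw [cubeDist_two_mul (mem_range.1 hj), cubeDist_two_mul_add_one (mem_range.1 hj), div_pow,
      div_pow, ← add_div, show ∀ v : ℝ, (1 + v) ^ 2 + (1 - v) ^ 2 = 2 * (1 + v ^ 2) by
        intro v; ring, cubeVertex_sq]]
  rw [sum_const, card_range, nsmul_eq_mul]
  field_simp

lemma tvDist_cubeDist (hδ : 0 ≤ δ) (h : symmDiff τ τ' ⊆ range n) :
    tvDist (cubeDist n δ τ) (cubeDist n δ τ') = δ * #(symmDiff τ τ') / n := by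
  rw [tvDist, tsum_eq_sum (s := range (2 * n)) fun i hi => by
    simp [cubeDist_of_le (by simpa using hi : 2 * n ≤ i)], sum_range_two_mul,
    sum_congr rfl fun j hj => by
      rw [cubeDist_two_mul (mem_range.1 hj), cubeDist_two_mul (mem_range.1 hj),
        cubeDist_two_mul_add_one (mem_range.1 hj), cubeDist_two_mul_add_one (mem_range.1 hj),
        ← sub_div, ← sub_div, show ∀ a b : ℝ, 1 + a - (1 + b) = a - b by intros; ring,
        show ∀ a b : ℝ, 1 - a - (1 - b) = -(a - b) by intros; ring, abs_div, abs_div, abs_neg,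
        ← add_div, ← two_mul, abs_cubeVertex_sub hδ]]
  rw [← sum_div, ← mul_sum, ← sum_filter, filter_mem_eq_inter, inter_eq_right.2 h, sum_const,
    nsmul_eq_mul]
  rcases Nat.eq_zero_or_pos n with rfl | hn
  · simp
  · have : |(2 * n : ℝ)| = 2 * n := abs_of_pos (by positivity)
    rw [this]
    field_simp

end Hypercube

section FewSamples

variable {n m : ℕ}

def unobserved (n : ℕ) (x : Fin m → ℕ) : Finset ℕ := (range n).filter fun j => ∀ t, x t / 2 ≠ j

lemma card_unobserved_ge (x : Fin m → ℕ) : n - m ≤ #(unobserved n x) := by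
  have hobs : #((range n).filter fun j => ¬∀ t, x t / 2 ≠ j) ≤ m := by
    calc #((range n).filter fun j => ¬∀ t, x t / 2 ≠ j)
        ≤ #(univ.image fun t => x t / 2) := card_le_card fun j hj => by
          simp only [mem_filter, not_forall, not_not] at hj
          obtain ⟨t, ht⟩ := hj.2
          exact mem_image.2 ⟨t, mem_univ t, ht⟩
      _ ≤ m := card_image_le.trans_eq (by simp)
  have := card_filter_add_card_filter_not (s := range n) (p := fun j => ∀ t, x t / 2 ≠ j)
  rw [card_range] at this
  rw [unobserved]
  omega

lemma likelihood_cubeDist_symmDiff_unobserved (δ : ℝ) (τ : Finset ℕ) (x : Fin m → ℕ) :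
    likelihood (cubeDist n δ (symmDiff τ (unobserved n x))) x = likelihood (cubeDist n δ τ) x :=
  prod_congr rfl fun t _ => cubeDist_congr <| by
    have : x t / 2 ∉ unobserved n x := fun h => (mem_filter.1 h).2 t rfl
    rw [mem_symmDiff]
    tauto

lemma two_mul_sum_successAt_cubeDist_le {est : (Fin m → ℕ) → ℕ → ℝ} {ε : ℝ} (hn : 0 < n)
    (hm : 2 * m ≤ n) (hε : ε < 1 / 8) (hest : ∀ x, IsProb (est x)) (x : Fin m → ℕ) :
    2 * ∑ τ ∈ (range n).powerset, successAt est ε (cubeDist n (1 / 2) τ) x ≤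
      ∑ τ ∈ (range n).powerset, likelihood (cubeDist n (1 / 2) τ) x := by
  set U := unobserved n x
  have hμ : ∀ τ, IsProbOn (2 * n) (cubeDist n (1 / 2) τ) :=
    isProbOn_cubeDist hn (by norm_num [abs_of_pos])
  have hU : U ⊆ range n := filter_subset _ _
  refine two_mul_sum_le_of_involutive (σ := fun τ => symmDiff τ U)
    (fun τ hτ => mem_powerset.2 (symmDiff_le_sup.trans (union_subset (mem_powerset.1 hτ) hU)))
    (symmDiff_symmDiff_cancel_right U) fun τ _ => ?_
  have hfar : 2 * ε < tvDist (cubeDist n (1 / 2) τ) (cubeDist n (1 / 2) (symmDiff τ U)) := by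
    rw [tvDist_cubeDist (by norm_num) (by rwa [symmDiff_symmDiff_cancel_left]),
      symmDiff_symmDiff_cancel_left, lt_div_iff₀ (by exact_mod_cast hn)]
    have hUn : (n : ℝ) ≤ #U + m := by
      exact_mod_cast Nat.sub_le_iff_le_add.1 (card_unobserved_ge x)
    have hmn : (2 * m : ℝ) ≤ n := by exact_mod_cast hm
    have hnR : (0 : ℝ) < n := by exact_mod_cast hn
    nlinarith
  have hflip : likelihood (cubeDist n (1 / 2) (symmDiff τ U)) x =
      likelihood (cubeDist n (1 / 2) τ) x :=
    likelihood_cubeDist_symmDiff_unobserved _ _ _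
  by_cases hclose : tvDist (est x) (cubeDist n (1 / 2) τ) ≤ ε
  · have hfar' : ¬tvDist (est x) (cubeDist n (1 / 2) (symmDiff τ U)) ≤ ε := fun h =>
      hfar.not_ge (tvDist_le_two_mul (hμ τ).1 (hest x) (hμ _).1 hclose h)
    rw [successAt, successAt, if_pos hclose, if_neg hfar', add_zero]
  · rw [successAt, if_neg hclose, zero_add, ← hflip]
    exact successAt_le_likelihood (hμ _).1.1 x

theorem exists_half_le_risk_of_two_mul_le {est : (Fin m → ℕ) → ℕ → ℝ} {ε : ℝ} (hn : 0 < n)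
    (hm : 2 * m ≤ n) (hε : ε < 1 / 8) (hest : ∀ x, IsProb (est x)) :
    ∃ μ, IsProbOn (2 * n) μ ∧ 1 / 2 ≤ risk est ε μ := by
  have hμ : ∀ τ, IsProbOn (2 * n) (cubeDist n (1 / 2) τ) :=
    isProbOn_cubeDist hn (by norm_num [abs_of_pos])
  refine exists_half_le_risk_of_sum_success_le (A := (range n).powerset)
    ⟨∅, empty_mem_powerset _⟩ (fun τ _ => hμ τ) ?_
  calc ∑ τ ∈ (range n).powerset, success (2 * n) est ε (cubeDist n (1 / 2) τ)
      = ∑ x ∈ sampleSpace (2 * n) m,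
          ∑ τ ∈ (range n).powerset, successAt est ε (cubeDist n (1 / 2) τ) x := sum_comm
    _ ≤ ∑ x ∈ sampleSpace (2 * n) m,
          1 / 2 * ∑ τ ∈ (range n).powerset, likelihood (cubeDist n (1 / 2) τ) x :=
        sum_le_sum fun x _ => by
          linarith [two_mul_sum_successAt_cubeDist_le hn hm hε hest x]
    _ = #(range n).powerset / 2 := by
        rw [← mul_sum, sum_comm, sum_congr rfl fun τ _ => (hμ τ).sum_likelihood]
        simp [div_eq_inv_mul]

end FewSamples

section Codes

variable {n K : ℕ}

def IsCode (n K : ℕ) (A : Finset (Finset ℕ)) : Prop :=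
  A ⊆ (range n).powerset ∧ (A : Set (Finset ℕ)).Pairwise fun τ τ' => K < #(symmDiff τ τ')

def hammingBall (n K : ℕ) (c : Finset ℕ) : Finset (Finset ℕ) :=
  (range n).powerset.filter fun y => #(symmDiff y c) ≤ K

lemma IsCode.symmDiff_subset {A : Finset (Finset ℕ)} (hA : IsCode n K A) {τ τ' : Finset ℕ}
    (hτ : τ ∈ A) (hτ' : τ' ∈ A) : symmDiff τ τ' ⊆ range n :=
  symmDiff_le_sup.trans (union_subset (mem_powerset.1 (hA.1 hτ)) (mem_powerset.1 (hA.1 hτ')))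

lemma exists_isCode_covering (n K : ℕ) :
    ∃ A, IsCode n K A ∧ ∀ y ∈ (range n).powerset, ∃ c ∈ A, y ∈ hammingBall n K c := by
  have hfin : {A | IsCode n K A}.Finite :=
    (range n).powerset.powerset.finite_toSet.subset fun A hA => mem_powerset.2 hA.1
  obtain ⟨A, hA, hmax⟩ := hfin.exists_maximalFor card _ ⟨∅, by simp [IsCode]⟩
  refine ⟨A, hA, fun y hy => by_contra fun hfar => ?_⟩
  simp only [hammingBall, mem_filter, hy, true_and, not_exists, not_and, not_le] at hfar
  have hyA : y ∉ A := fun h => by simpa using hfar y h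
  have hcode : IsCode n K (insert y A) := by
    refine ⟨insert_subset hy hA.1, ?_⟩
    rw [coe_insert, Set.pairwise_insert]
    exact ⟨hA.2, fun c hc _ => ⟨hfar c hc, symmDiff_comm y c ▸ hfar c hc⟩⟩
  have := hmax hcode (card_le_card (subset_insert y A))
  rw [card_insert_of_notMem hyA] at this
  omega

lemma card_hammingBall_le {c : Finset ℕ} (hc : c ⊆ range n) :
    #(hammingBall n K c) ≤ #(hammingBall n K ∅) := by
  refine (card_le_card fun y hy => ?_).trans (card_image_le (f := fun z => symmDiff z c))
  rw [hammingBall, mem_filter, mem_powerset] at hy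
  refine mem_image.2 ⟨symmDiff y c, ?_, symmDiff_symmDiff_cancel_right c y⟩
  rw [hammingBall, mem_filter, mem_powerset, ← bot_eq_empty, symmDiff_bot]
  exact ⟨symmDiff_le_sup.trans (union_subset hy.1 hc), hy.2⟩

/-- Gilbert–Varshamov: the Hamming balls of radius `K` around a maximal code cover the cube. -/
theorem exists_isCode_two_pow_le (n K : ℕ) :
    ∃ A, IsCode n K A ∧ 2 ^ n ≤ #A * #(hammingBall n K ∅) := by
  obtain ⟨A, hA, hcover⟩ := exists_isCode_covering n K
  refine ⟨A, hA, ?_⟩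
  calc 2 ^ n = #(range n).powerset := by rw [card_powerset, card_range]
    _ ≤ #(A.biUnion (hammingBall n K)) := card_le_card fun y hy => by
        obtain ⟨c, hc, hyc⟩ := hcover y hy
        exact mem_biUnion.2 ⟨c, hc, hyc⟩
    _ ≤ ∑ c ∈ A, #(hammingBall n K c) := card_biUnion_le
    _ ≤ ∑ _c ∈ A, #(hammingBall n K ∅) :=
        sum_le_sum fun c hc => card_hammingBall_le (mem_powerset.1 (hA.1 hc))
    _ = #A * #(hammingBall n K ∅) := by rw [sum_const, smul_eq_mul]

/-- Each point of the ball has weight `β^{#z} (1 - β)^{n - #z} ≥ βᴷ (1 - β)ⁿ`, and these weights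
sum to `(β + (1 - β))ⁿ = 1` over the whole cube. -/
lemma card_hammingBall_mul_le_one {β : ℝ} (hβ₀ : 0 ≤ β) (hβ₁ : β ≤ 1) :
    #(hammingBall n K ∅) * (β ^ K * (1 - β) ^ n) ≤ 1 := by
  have hweight : ∀ z ∈ (range n).powerset,
      0 ≤ (∏ _i ∈ z, β) * ∏ _i ∈ range n \ z, (1 - β) := fun z _ => by
    rw [prod_const, prod_const]; exact mul_nonneg (pow_nonneg hβ₀ _) (pow_nonneg (by linarith) _)
  calc #(hammingBall n K ∅) * (β ^ K * (1 - β) ^ n)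
      = ∑ z ∈ hammingBall n K ∅, β ^ K * (1 - β) ^ n := by rw [sum_const, nsmul_eq_mul]
    _ ≤ ∑ z ∈ hammingBall n K ∅, (∏ _i ∈ z, β) * ∏ _i ∈ range n \ z, (1 - β) :=
        sum_le_sum fun z hz => by
          rw [hammingBall, mem_filter, ← bot_eq_empty, symmDiff_bot] at hz
          rw [prod_const, prod_const]
          exact mul_le_mul (pow_le_pow_of_le_one hβ₀ hβ₁ hz.2)
            (pow_le_pow_of_le_one (by linarith) (by linarith)
              ((card_le_card sdiff_subset).trans_eq (card_range n)))
            (pow_nonneg (by linarith) _) (pow_nonneg hβ₀ _)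
    _ ≤ ∑ z ∈ (range n).powerset, (∏ _i ∈ z, β) * ∏ _i ∈ range n \ z, (1 - β) :=
        sum_le_sum_of_subset_of_nonneg (filter_subset _ _) fun z hz _ => hweight z hz
    _ = 1 := by rw [← prod_add, add_sub_cancel, prod_const_one]

end Codes

section ManySamples

variable {n m K : ℕ}

lemma exp_quarter_le : Real.exp (1 / 4) ≤ 1.29 := by
  refine le_of_pow_le_pow_left₀ (n := 4) (by norm_num) (by norm_num) ?_
  rw [← Real.exp_nat_mul]
  norm_num
  exact Real.exp_one_lt_d9.le.trans (by norm_num)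

lemma two_pow_le_one_add_pow (hK : 2 ^ 20 * K ≤ n) : (2 : ℝ) ^ (16 * K) ≤ (1 + 1 / 65536) ^ n := by
  have hbernoulli : (2 : ℝ) ≤ (1 + 1 / 65536) ^ 65536 :=
    calc (2 : ℝ) = 1 + (65536 : ℕ) * (1 / 65536) := by norm_num
      _ ≤ (1 + 1 / 65536) ^ 65536 := one_add_mul_le_pow (by norm_num) _
  calc (2 : ℝ) ^ (16 * K) ≤ ((1 + 1 / 65536) ^ 65536) ^ (16 * K) := by gcongr
    _ = (1 + 1 / 65536) ^ (2 ^ 20 * K) := by rw [← pow_mul]; ring_nf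
    _ ≤ (1 + 1 / 65536) ^ n := pow_le_pow_right₀ (by norm_num) hK

/-- With `β = 2⁻¹⁶`, Bernoulli gives `β⁻ᴷ = 2^{16K} ≤ (1 + β)ⁿ`, and
`4 (e^{1/4} (1 + β))ⁿ ≤ (2 (1 - β))ⁿ` once `n ≥ 8`. -/
lemma four_mul_exp_le (hn : 8 ≤ n) (hK : 2 ^ 20 * K ≤ n) :
    4 * Real.exp (n / 4) ≤ 2 ^ n * ((1 / 65536) ^ K * (1 - 1 / 65536) ^ n) := by
  have hexp : Real.exp (n / 4) = Real.exp (1 / 4) ^ n := by rw [← Real.exp_nat_mul]; ring_nf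
  have hβK : (2 : ℝ) ^ (16 * K) * (1 / 65536) ^ K = 1 := by rw [pow_mul, ← mul_pow]; norm_num
  have hbase : 4 * (Real.exp (1 / 4) * (1 + 1 / 65536)) ^ n ≤ (2 * (1 - 1 / 65536)) ^ n := by
    calc 4 * (Real.exp (1 / 4) * (1 + 1 / 65536)) ^ n
        ≤ (1.55 : ℝ) ^ n * (1.29 * (1 + 1 / 65536)) ^ n := by
          gcongr
          · exact (by norm_num : (4 : ℝ) ≤ 1.55 ^ 8).trans (pow_le_pow_right₀ (by norm_num) hn)
          · exact exp_quarter_le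
      _ ≤ (2 * (1 - 1 / 65536)) ^ n := by
          rw [← mul_pow]; exact pow_le_pow_left₀ (by positivity) (by norm_num) n
  calc 4 * Real.exp (n / 4) = 4 * Real.exp (n / 4) * ((2 : ℝ) ^ (16 * K) * (1 / 65536) ^ K) := by
        rw [hβK, mul_one]
    _ ≤ 4 * Real.exp (1 / 4) ^ n * (1 + 1 / 65536) ^ n * (1 / 65536) ^ K := by
        rw [hexp, ← mul_assoc]; gcongr; exact two_pow_le_one_add_pow hK
    _ = 4 * (Real.exp (1 / 4) * (1 + 1 / 65536)) ^ n * (1 / 65536) ^ K := by rw [mul_pow]; ring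
    _ ≤ (2 * (1 - 1 / 65536)) ^ n * (1 / 65536) ^ K := by gcongr
    _ = 2 ^ n * ((1 / 65536) ^ K * (1 - 1 / 65536) ^ n) := by rw [mul_pow]; ring

lemma four_mul_one_add_sq_pow_le_card {A : Finset (Finset ℕ)} {δ : ℝ} (hn : 8 ≤ n)
    (hK : 2 ^ 20 * K ≤ n) (hmδ : m * δ ^ 2 ≤ n / 4) (hA : 2 ^ n ≤ #A * #(hammingBall n K ∅)) :
    4 * (1 + δ ^ 2) ^ m ≤ #A := by
  set β : ℝ := 1 / 65536
  calc 4 * (1 + δ ^ 2) ^ m ≤ 4 * Real.exp (δ ^ 2) ^ m := by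
        gcongr; linarith [Real.add_one_le_exp (δ ^ 2)]
    _ ≤ 4 * Real.exp (n / 4) := by rw [← Real.exp_nat_mul]; gcongr
    _ ≤ 2 ^ n * (β ^ K * (1 - β) ^ n) := four_mul_exp_le hn hK
    _ ≤ #A * #(hammingBall n K ∅) * (β ^ K * (1 - β) ^ n) := by gcongr; exact_mod_cast hA
    _ ≤ #A := by
        rw [mul_assoc]
        exact mul_le_of_le_one_right (Nat.cast_nonneg _)
          (card_hammingBall_mul_le_one (by norm_num) (by norm_num))

lemma IsCode.two_mul_lt_tvDist_cubeDist {A : Finset (Finset ℕ)} (hA : IsCode n (n / 2 ^ 20) A)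
    {ε δ : ℝ} (hn : 0 < n) (hε : 0 < ε) (hεδ : 2 ^ 21 * ε ≤ δ) :
    (A : Set (Finset ℕ)).Pairwise fun τ τ' =>
      2 * ε < tvDist (cubeDist n δ τ) (cubeDist n δ τ') := by
  intro τ hτ τ' hτ' hne
  rw [tvDist_cubeDist (by linarith) (hA.symmDiff_subset hτ hτ'),
    lt_div_iff₀ (by exact_mod_cast hn)]
  have : (n : ℝ) < 2 ^ 20 * #(symmDiff τ τ') := by
    exact_mod_cast (Nat.lt_mul_div_succ n (by norm_num)).trans_le
      (Nat.mul_le_mul_left _ (hA.2 hτ hτ' hne))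
  nlinarith

theorem exists_half_le_risk_of_lt_two_mul {est : (Fin m → ℕ) → ℕ → ℝ} {ε : ℝ} (hn : 8 ≤ n)
    (hm : n < 2 * m) (hε : 0 < ε) (hreg : 2 ^ 46 * m * ε ^ 2 < 2 * n)
    (hest : ∀ x, IsProb (est x)) : ∃ μ, IsProbOn (2 * n) μ ∧ 1 / 2 ≤ risk est ε μ := by
  have hmR : (0 : ℝ) < m := by exact_mod_cast (by omega : 0 < m)
  set δ := √(n / (4 * m))
  have hδsq : δ ^ 2 = n / (4 * m) := Real.sq_sqrt (by positivity)
  have hδ1 : |δ| ≤ 1 := by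
    rw [abs_of_nonneg (Real.sqrt_nonneg _), Real.sqrt_le_one, div_le_one (by positivity)]
    exact_mod_cast (by omega : n ≤ 4 * m)
  have hεδ : 2 ^ 21 * ε ≤ δ := by
    rw [Real.le_sqrt (by positivity) (by positivity), le_div_iff₀ (by positivity)]
    nlinarith
  have hμ : ∀ τ, IsProbOn (2 * n) (cubeDist n δ τ) := isProbOn_cubeDist (by omega) hδ1
  obtain ⟨A, hA, hcard⟩ := exists_isCode_two_pow_le n (n / 2 ^ 20)
  have hAbig : 4 * (1 + δ ^ 2) ^ m ≤ #A :=
    four_mul_one_add_sq_pow_le_card hn (Nat.mul_div_le n _)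
      (by rw [hδsq]; field_simp; rfl) hcard
  have hA0 : (0 : ℝ) < #A := lt_of_lt_of_le (by positivity) hAbig
  refine exists_half_le_risk_of_sum_success_le (card_pos.1 (by exact_mod_cast hA0))
    (fun τ _ => hμ τ) ?_
  calc ∑ τ ∈ A, success (2 * n) est ε (cubeDist n δ τ)
      ≤ √((2 * n : ℕ) ^ m * ∑ τ ∈ A, (∑ a ∈ range (2 * n), cubeDist n δ τ a ^ 2) ^ m) :=
        sum_success_le_sqrt (fun τ _ => hμ τ) hest
          (hA.two_mul_lt_tvDist_cubeDist (by omega) hε hεδ)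
    _ = √(#A * (1 + δ ^ 2) ^ m) := by
        simp only [sum_cubeDist_sq (by omega : 0 < n), sum_const, nsmul_eq_mul, div_pow]
        push_cast
        field_simp
    _ ≤ √((#A / 2) ^ 2) := Real.sqrt_le_sqrt (by nlinarith)
    _ = #A / 2 := Real.sqrt_sq (by positivity)

end ManySamples

/-- there is a universal constant `C > 0` such that for every even
`d ≥ 16`, every `m`, and every `ε ∈ (0, 1/16)`, and every estimator with values in `Δ_d`,
`sup_{μ ∈ Δ_d} P(‖μ̄(X) - μ‖_TV > ε) ≥ (1/2)(1 - C m ε²/d)`;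
hence the same lower bound for the minimax risk. -/
theorem minimax_lower_tsybakov :
    ∃ C > (0 : ℝ), ∀ d : ℕ, Even d → 16 ≤ d → ∀ m : ℕ, 0 < m →
      ∀ ε : ℝ, 0 < ε → ε < 1 / 16 →
        ∀ est : (Fin m → ℕ) → (ℕ → ℝ), (∀ x, IsProbOn d (est x)) →
          (1 / 2) * (1 - C * m * ε ^ 2 / d) ≤
            sSup {r : ℝ | ∃ μ : ℕ → ℝ, IsProbOn d μ ∧
              r = probOf μ m {x | ε < tvDist (est x) μ}} := by
  refine ⟨2 ^ 46, by positivity, ?_⟩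
  rintro d ⟨n, rfl⟩ hd m - ε hε hε' est hest
  rw [← two_mul] at hd hest ⊢
  have hest' : ∀ x, IsProb (est x) := fun x => (hest x).1
  obtain ⟨μ, hμ, hrisk⟩ : ∃ μ, IsProbOn (2 * n) μ ∧
      (1 / 2) * (1 - 2 ^ 46 * m * ε ^ 2 / (2 * n : ℕ)) ≤ risk est ε μ := by
    by_cases hreg : 2 ^ 46 * m * ε ^ 2 < 2 * (n : ℝ)
    · obtain ⟨μ, hμ, h⟩ : ∃ μ, IsProbOn (2 * n) μ ∧ 1 / 2 ≤ risk est ε μ := by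
        rcases le_or_gt (2 * m) n with hm | hm
        · exact exists_half_le_risk_of_two_mul_le (by omega) hm (by linarith) hest'
        · exact exists_half_le_risk_of_lt_two_mul (by omega) hm hε hreg hest'
      refine ⟨μ, hμ, le_trans ?_ h⟩
      have : 0 ≤ 2 ^ 46 * m * ε ^ 2 / (2 * n : ℕ) := by positivity
      linarith
    · have hunif : IsProbOn (2 * n) (cubeDist n 0 ∅) := isProbOn_cubeDist (by omega) (by simp) ∅
      refine ⟨_, hunif, le_trans ?_ hunif.risk_nonneg⟩
      have hn : (0 : ℝ) < 2 * n := by exact_mod_cast (by omega : 0 < 2 * n)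
      have : 1 ≤ 2 ^ 46 * m * ε ^ 2 / (2 * n : ℕ) := by
        push_cast; rw [le_div_iff₀ hn]; linarith
      linarith
  exact hrisk.trans hμ.risk_le_sSup
end

section
/- For every probability distribution μ on ℕ, the statistic Φ_m(μ̂_m) = (1/√m)·‖μ̂_m‖_{1/2}^{1/2} computed from an i.i.d. sample X_1, X_2, ... ~ μ converges to 0 both in L¹ and almost surely as m → ∞. -/
open scoped BigOperators

open MeasureTheory

/-! Each atom contributes `√(μ̂_m j) / √m` to `Φ_m(μ̂_m)`; this is at most `1 / √m`, and, since
`m μ̂_m(j)` is an integer, at most `μ̂_m(j)`. Splitting at a cutoff `J` therefore gives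
`Φ_m ≤ J / √m + #{t < m | X_t ≥ J} / m`. The cylinder hypothesis identifies `P` with the
i.i.d. product measure, so by the strong law of large numbers the last fraction converges almost
surely to `μ[J, ∞)`, which is small for large `J`. Since moreover `Φ_m ≤ 1` and the expectation
under `μ^m` is the integral under `P`, bounded convergence gives the `L¹` statement. -/

open Filter Topology Finset ProbabilityTheory

lemma hasSum_empMeas_mul {m : ℕ} (x : Fin m → ℕ) (g : ℕ → ℝ) :
    HasSum (fun j => empMeas m x j * g j) ((∑ t, g (x t)) / m) := by
  have h : ∀ j, empMeas m x j * g j = ∑ t, if j = x t then g (x t) / m else 0 := by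
    intro j
    simp only [empMeas, card_filter, Nat.cast_sum, Nat.cast_ite, Nat.cast_one, Nat.cast_zero,
      sum_div, sum_mul]
    refine sum_congr rfl fun t _ => ?_
    by_cases hj : j = x t <;> simp [hj, eq_comm, div_eq_mul_inv, mul_comm]
  simp_rw [h, sum_div]
  exact hasSum_sum fun t _ => hasSum_ite_eq (x t) _

lemma empMeas_le_one {m : ℕ} (x : Fin m → ℕ) (j : ℕ) : empMeas m x j ≤ 1 := by
  unfold empMeas
  refine div_le_one_of_le₀ ?_ m.cast_nonneg
  exact_mod_cast (card_filter_le _ _).trans (card_fin m).le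

lemma sqrt_empMeas_div_sqrt_le {m : ℕ} (x : Fin m → ℕ) (j : ℕ) :
    √(empMeas m x j) / √m ≤ empMeas m x j := by
  set c : ℕ := (univ.filter fun t => x t = j).card
  have hc : √(c : ℝ) ≤ c := by
    rcases c.eq_zero_or_pos with h | h
    · simp [h]
    · exact Real.sqrt_le_self_iff.2 (Or.inr (by exact_mod_cast h))
  rw [empMeas, Real.sqrt_div' _ m.cast_nonneg, div_div, Real.mul_self_sqrt m.cast_nonneg]
  exact div_le_div_of_nonneg_right hc m.cast_nonneg

lemma Phi_empMeas_le {m : ℕ} (x : Fin m → ℕ) (J : ℕ) :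
    Phi m (empMeas m x) ≤ J / √m + (∑ t, (Set.Ici J).indicator 1 (x t)) / m := by
  have hlow : HasSum (fun j => if j < J then 1 / √m else 0) (J / √m) := by
    have h : HasSum (fun j => if j < J then 1 / √m else 0)
        (∑ j ∈ range J, if j < J then 1 / √m else 0) :=
      hasSum_sum_of_ne_finset_zero fun j hj => if_neg (by simpa using hj)
    rwa [sum_ite_of_true fun j hj => mem_range.1 hj, sum_const, card_range, nsmul_eq_mul,
      mul_one_div] at h
  have hle : ∀ j, √(empMeas m x j) / √m ≤
      (if j < J then 1 / √m else 0) + empMeas m x j * (Set.Ici J).indicator 1 j := by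
    intro j
    by_cases hj : j < J
    · have hsqrt : √(empMeas m x j) ≤ 1 := Real.sqrt_le_one.2 (empMeas_le_one x j)
      rw [if_pos hj, Set.indicator_of_notMem (by simpa using hj), mul_zero, add_zero]
      exact div_le_div_of_nonneg_right hsqrt (Real.sqrt_nonneg _)
    · rw [if_neg hj, Set.indicator_of_mem (by simpa using hj), Pi.one_apply, mul_one, zero_add]
      exact sqrt_empMeas_div_sqrt_le x j
  have hsum : Summable fun j => √(empMeas m x j) / √m :=
    (hlow.add (hasSum_empMeas_mul x _)).summable.of_nonneg_of_le (fun j => by positivity) hle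
  rw [Phi, one_div_mul_eq_div, ← tsum_div_const]
  exact hasSum_le hle hsum.hasSum (hlow.add (hasSum_empMeas_mul x _))

lemma Phi_empMeas_nonneg {m : ℕ} (x : Fin m → ℕ) : 0 ≤ Phi m (empMeas m x) := by
  unfold Phi; positivity

lemma norm_Phi_empMeas_le_one {m : ℕ} (x : Fin m → ℕ) : ‖Phi m (empMeas m x)‖ ≤ 1 := by
  rw [Real.norm_of_nonneg (Phi_empMeas_nonneg x)]
  have h := Phi_empMeas_le x 0
  have hone : ∀ k : ℕ, (Set.Ici 0).indicator (1 : ℕ → ℝ) k = 1 := fun k =>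
    Set.indicator_of_mem (Set.mem_Ici.2 k.zero_le) _
  simp only [hone, sum_const, card_univ, Fintype.card_fin, nsmul_eq_mul, mul_one,
    CharP.cast_eq_zero, zero_div, zero_add] at h
  exact h.trans (div_self_le_one _)

lemma tendsto_zero_of_forall_le_of_tendsto {u : ℕ → ℝ} {v : ℕ → ℕ → ℝ} {p : ℕ → ℝ}
    (hu : ∀ m, 0 ≤ u m) (huv : ∀ J m, u m ≤ v J m) (hv : ∀ J, Tendsto (v J) atTop (𝓝 (p J)))
    (hp : Tendsto p atTop (𝓝 0)) : Tendsto u atTop (𝓝 0) := by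
  refine tendsto_order.2 ⟨fun a ha => .of_forall fun m => ha.trans_le (hu m), fun b hb => ?_⟩
  obtain ⟨J, hJ⟩ := (hp.eventually (gt_mem_nhds hb)).exists
  exact ((hv J).eventually (gt_mem_nhds hJ)).mono fun m hm => (huv J m).trans_lt hm

lemma tendsto_measureReal_Ici_atTop (ν : Measure ℕ) [IsFiniteMeasure ν] :
    Tendsto (fun J : ℕ => ν.real (Set.Ici J)) atTop (𝓝 0) := by
  have h := tendsto_measure_iInter_atTop (μ := ν) (fun J => measurableSet_Ici.nullMeasurableSet)
    (fun _ _ hJ => Set.Ici_subset_Ici.2 hJ) ⟨0, measure_ne_top ν _⟩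
  rw [Set.iInter_eq_empty_iff.2 fun k => ⟨k + 1, by simp⟩, measure_empty] at h
  exact (ENNReal.tendsto_toReal ENNReal.zero_ne_top).comp h

section IIDSample

variable (ν : Measure ℕ) [IsProbabilityMeasure ν]

lemma ae_tendsto_avg_indicator (s : Set ℕ) :
    ∀ᵐ ω ∂(Measure.infinitePi fun _ : ℕ => ν),
      Tendsto (fun n : ℕ => (∑ i ∈ range n, s.indicator (1 : ℕ → ℝ) (ω i)) / n) atTop
        (𝓝 (ν.real s)) := by
  set X : ℕ → (ℕ → ℕ) → ℝ := fun i ω => s.indicator 1 (ω i)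
  have hX : ∀ i, Measurable (X i) := fun i =>
    (measurable_of_countable (s.indicator 1)).comp (measurable_pi_apply i)
  have hlaw : ∀ i, (Measure.infinitePi fun _ : ℕ => ν).map (X i) = ν.map (s.indicator 1) := by
    intro i
    change Measure.map (s.indicator 1 ∘ fun ω : ℕ → ℕ => ω i) _ = _
    rw [← Measure.map_map (g := s.indicator 1) (measurable_of_countable _) (measurable_pi_apply i),
      Measure.infinitePi_map_eval]
  have hmean : ∫ ω, X 0 ω ∂(Measure.infinitePi fun _ : ℕ => ν) = ν.real s := by
    change ∫ ω : ℕ → ℕ, s.indicator 1 (ω 0) ∂_ = _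
    rw [← integral_map (measurable_pi_apply 0).aemeasurable
      (measurable_of_countable _).aestronglyMeasurable, Measure.infinitePi_map_eval,
      integral_indicator_one .of_discrete]
  rw [← hmean]
  refine strong_law_ae_real X ?_ (fun i j hij => ?_) (fun i => ?_)
  · refine .of_bound (hX 0).aestronglyMeasurable 1 (ae_of_all _ fun ω => ?_)
    exact (norm_indicator_le_norm_self _ _).trans_eq norm_one
  · exact (iIndepFun_infinitePi (P := fun _ : ℕ => ν)
      (X := fun _ k => s.indicator (1 : ℕ → ℝ) k) fun _ => measurable_of_countable _).indepFun hij
  · exact ⟨(hX i).aemeasurable, (hX 0).aemeasurable, by rw [hlaw, hlaw]⟩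

lemma ae_tendsto_Phi_empMeas :
    ∀ᵐ ω ∂(Measure.infinitePi fun _ : ℕ => ν),
      Tendsto (fun m => Phi m (empMeas m fun t : Fin m => ω t)) atTop (𝓝 0) := by
  filter_upwards [ae_all_iff.2 fun J => ae_tendsto_avg_indicator ν (Set.Ici J)] with ω hω
  refine tendsto_zero_of_forall_le_of_tendsto (fun m => Phi_empMeas_nonneg _)
    (v := fun J m => J / √m + (∑ i ∈ range m, (Set.Ici J).indicator 1 (ω i)) / m)
    (fun J m => ?_) (fun J => ?_) (tendsto_measureReal_Ici_atTop ν)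
  · rw [← Fin.sum_univ_eq_sum_range fun i => (Set.Ici J).indicator (1 : ℕ → ℝ) (ω i)]
    exact Phi_empMeas_le _ J
  · have hJ : Tendsto (fun m : ℕ => (J : ℝ) / √m) atTop (𝓝 0) :=
      tendsto_const_nhds.div_atTop (Real.tendsto_sqrt_atTop.comp tendsto_natCast_atTop_atTop)
    simpa using hJ.add (hω J)

lemma tendsto_integral_Phi_empMeas :
    Tendsto (fun m => ∫ ω, Phi m (empMeas m fun t : Fin m => ω t)
      ∂(Measure.infinitePi fun _ : ℕ => ν)) atTop (𝓝 0) := by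
  have hmeas : ∀ m, Measurable fun ω : ℕ → ℕ => Phi m (empMeas m fun t : Fin m => ω t) :=
    fun m => (measurable_of_countable fun x : Fin m → ℕ => Phi m (empMeas m x)).comp
      (measurable_pi_lambda _ fun t => measurable_pi_apply _)
  simpa using tendsto_integral_of_dominated_convergence (fun _ => 1)
    (fun m => (hmeas m).aestronglyMeasurable) (integrable_const 1)
    (fun m => ae_of_all _ fun ω => norm_Phi_empMeas_le_one _) (ae_tendsto_Phi_empMeas ν)

end IIDSample

section Cylinders

variable {μ : ℕ → ℝ} {P : Measure (ℕ → ℕ)}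
  (hcyl : ∀ (m : ℕ) (y : Fin m → ℕ),
    P {ω | ∀ t : Fin m, ω (t : ℕ) = y t} = ENNReal.ofReal (∏ t, μ (y t)))
include hcyl

lemma map_restrict_singleton (m : ℕ) (y : Fin m → ℕ) :
    P.map (fun ω (t : Fin m) => ω t) {y} = ENNReal.ofReal (∏ t, μ (y t)) := by
  rw [Measure.map_apply (by fun_prop) (measurableSet_singleton y), ← hcyl m y]
  congr 1
  ext ω
  simp [funext_iff]

lemma map_eval_zero_singleton (k : ℕ) : P.map (fun ω => ω 0) {k} = ENNReal.ofReal (μ k) := by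
  rw [Measure.map_apply (by fun_prop) (measurableSet_singleton k)]
  simpa [Fin.forall_fin_one, Set.preimage] using hcyl 1 fun _ => k

variable (hμ : ∀ i, 0 ≤ μ i)
include hμ

lemma expect_eq_integral [IsFiniteMeasure P] (m : ℕ) (f : (Fin m → ℕ) → ℝ) (C : ℝ)
    (hf : ∀ x, ‖f x‖ ≤ C) : expect μ m f = ∫ ω, f (fun t => ω t) ∂P := by
  have hfm : AEStronglyMeasurable f (P.map fun ω (t : Fin m) => ω t) :=
    (measurable_of_countable f).aestronglyMeasurable
  rw [← integral_map (measurable_pi_lambda _ fun t => measurable_pi_apply _).aemeasurable hfm,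
    integral_countable (.of_bound hfm C (ae_of_all _ hf))]
  refine tsum_congr fun y => ?_
  rw [measureReal_def, map_restrict_singleton hcyl,
    ENNReal.toReal_ofReal (prod_nonneg fun t _ => hμ _), smul_eq_mul]

variable {ν : Measure ℕ} (hν : ∀ k, ν {k} = ENNReal.ofReal (μ k))
include hν

lemma map_restrict_eq_pi [SigmaFinite ν] (m : ℕ) :
    P.map (fun ω (t : Fin m) => ω t) = Measure.pi fun _ => ν := by
  refine Measure.ext_of_singleton fun y => ?_
  rw [map_restrict_singleton hcyl, Measure.pi_singleton,
    ENNReal.ofReal_prod_of_nonneg fun t _ => hμ _]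
  simp only [hν]

lemma eq_infinitePi_of_cylinder [IsProbabilityMeasure ν] : P = Measure.infinitePi fun _ => ν := by
  refine Measure.eq_infinitePi _ fun s t _ => ?_
  obtain ⟨n, hsn⟩ := s.exists_nat_subset_range
  have hpre : Set.pi s t = (fun ω (k : Fin n) => ω k) ⁻¹'
      Set.univ.pi fun k : Fin n => if (k : ℕ) ∈ s then t k else Set.univ := by
    ext ω
    simp only [Set.mem_pi, Set.mem_preimage, Set.mem_univ, true_implies, Finset.mem_coe]
    refine ⟨fun h k => ?_, fun h i hi => by simpa [hi] using h ⟨i, mem_range.1 (hsn hi)⟩⟩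
    split_ifs with hk
    exacts [h k hk, trivial]
  rw [hpre, ← Measure.map_apply (by fun_prop) (MeasurableSet.of_discrete),
    map_restrict_eq_pi hcyl hμ hν, Measure.pi_pi]
  simp_rw [apply_ite ν, measure_univ]
  rw [Fin.prod_univ_eq_prod_range (fun i => if i ∈ s then ν (t i) else 1), prod_ite_mem,
    inter_eq_right.2 hsn]

end Cylinders

/-- for every probability distribution `μ` on ℕ, the statistic
`Φ_m(μ̂_m)` computed from the first `m` terms of an i.i.d. sequence `X_1, X_2, … ~ μ`
converges to `0` in `L¹` (i.e. its expectation under `μ^m` tends to `0`) and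
almost surely (under any probability measure `P` on `ℕ^ℕ` whose finite-dimensional
marginals are those of the i.i.d. product). -/
theorem Phi_tendsto_zero (μ : ℕ → ℝ) (hμ : IsProb μ)
    (P : Measure (ℕ → ℕ)) (hP : IsProbabilityMeasure P)
    (hcyl : ∀ (m : ℕ) (y : Fin m → ℕ),
      P {ω | ∀ t : Fin m, ω (t : ℕ) = y t} = ENNReal.ofReal (∏ t, μ (y t))) :
    Filter.Tendsto (fun m => expect μ m (fun x => Phi m (empMeas m x)))
      Filter.atTop (nhds 0) ∧
    ∀ᵐ ω ∂P, Filter.Tendsto (fun m => Phi m (empMeas m (fun t : Fin m => ω (t : ℕ))))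
      Filter.atTop (nhds 0) := by
  set ν := P.map fun ω => ω 0
  have : IsProbabilityMeasure ν :=
    Measure.isProbabilityMeasure_map (measurable_pi_apply 0).aemeasurable
  have hP_eq : P = Measure.infinitePi fun _ => ν :=
    eq_infinitePi_of_cylinder hcyl hμ.1 (map_eval_zero_singleton hcyl)
  have hexpect : ∀ m, expect μ m (fun x => Phi m (empMeas m x)) =
      ∫ ω, Phi m (empMeas m fun t : Fin m => ω t) ∂P := fun m =>
    expect_eq_integral hcyl hμ.1 m _ 1 norm_Phi_empMeas_le_one
  simp_rw [hexpect]
  rw [hP_eq]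
  exact ⟨tendsto_integral_Phi_empMeas ν, ae_tendsto_Phi_empMeas ν⟩
end
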